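/- arXiv:2005.12578 — 3 statements merged into one kernel-verified Lean document; each statement's English description precedes it below -/
import Mathlib

section
/- The Lie algebra su(2) of traceless skew-Hermitian 2x2 complex matrices is spanned (over the reals) by the set of nested commutators {[X,[X,Y]] : X, Y in su(2)}. -/
/-!
The nested commutators span a subspace of su(2) because su(2) is closed under the bracket.
Conversely, for the basis `e₁ = iσ₃`, `e₂ = iσ₂`, `e₃ = iσ₁` one has `[eᵢ, eⱼ] = 2 eₖ` cyclically,
so `[eᵢ, [eᵢ, eⱼ]] = -4 eⱼ` for `i ≠ j`: every basis vector is itself a nested commutator up to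
a nonzero real factor.
-/

open Matrix

theorem mem_span_lie_lie_of_lie_lie_eq_smul {R A : Type*} [Field R] [Ring A] [Module R A]
    {K : Set A} {X Y : A} (hX : X ∈ K) (hY : Y ∈ K) {c : R} (hc : c ≠ 0)
    (h : ⁅X, ⁅X, Y⁆⁆ = c • Y) :
    Y ∈ Submodule.span R {Z | ∃ X ∈ K, ∃ Y ∈ K, Z = ⁅X, ⁅X, Y⁆⁆} := by
  rw [← inv_smul_smul₀ hc Y, ← h]
  exact Submodule.smul_mem _ _ (Submodule.subset_span ⟨X, hX, Y, hY, rfl⟩)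

def specialUnitaryLieAlgebra (n : Type*) [Fintype n] [DecidableEq n] :
    Submodule ℝ (Matrix n n ℂ) where
  carrier := {X | Xᴴ = -X ∧ X.trace = 0}
  zero_mem' := by simp
  add_mem' := by
    rintro X Y ⟨hX, tX⟩ ⟨hY, tY⟩
    exact ⟨by rw [conjTranspose_add, hX, hY, neg_add], by rw [trace_add, tX, tY, add_zero]⟩
  smul_mem' := by
    rintro c X ⟨hX, tX⟩
    exact ⟨by rw [conjTranspose_smul, hX, star_trivial, smul_neg],
      by rw [trace_smul, tX, smul_zero]⟩

namespace specialUnitaryLieAlgebra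

variable {n : Type*} [Fintype n] [DecidableEq n]

theorem mem_iff {X : Matrix n n ℂ} :
    X ∈ specialUnitaryLieAlgebra n ↔ Xᴴ = -X ∧ X.trace = 0 := Iff.rfl

theorem lie_mem {X Y : Matrix n n ℂ} (hX : X ∈ specialUnitaryLieAlgebra n)
    (hY : Y ∈ specialUnitaryLieAlgebra n) : ⁅X, Y⁆ ∈ specialUnitaryLieAlgebra n := by
  refine ⟨?_, by rw [Ring.lie_def, trace_sub, trace_mul_comm, sub_self]⟩
  rw [Ring.lie_def, conjTranspose_sub, conjTranspose_mul, conjTranspose_mul, hX.1, hY.1]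
  noncomm_ring

theorem span_lie_lie_le :
    Submodule.span ℝ {Z | ∃ X ∈ specialUnitaryLieAlgebra n, ∃ Y ∈ specialUnitaryLieAlgebra n,
      Z = ⁅X, ⁅X, Y⁆⁆} ≤ specialUnitaryLieAlgebra n :=
  Submodule.span_le.mpr <| by
    rintro _ ⟨X, hX, Y, hY, rfl⟩
    exact lie_mem hX (lie_mem hX hY)

noncomputable def e₁ : Matrix (Fin 2) (Fin 2) ℂ := !![Complex.I, 0; 0, -Complex.I]
def e₂ : Matrix (Fin 2) (Fin 2) ℂ := !![0, 1; -1, 0]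
noncomputable def e₃ : Matrix (Fin 2) (Fin 2) ℂ := !![0, Complex.I; Complex.I, 0]

theorem e₁_mem : e₁ ∈ specialUnitaryLieAlgebra (Fin 2) := by
  simp [mem_iff, ← Matrix.ext_iff, Fin.forall_fin_two, e₁, trace_fin_two]

theorem e₂_mem : e₂ ∈ specialUnitaryLieAlgebra (Fin 2) := by
  simp [mem_iff, ← Matrix.ext_iff, Fin.forall_fin_two, e₂, trace_fin_two]

theorem e₃_mem : e₃ ∈ specialUnitaryLieAlgebra (Fin 2) := by
  simp [mem_iff, ← Matrix.ext_iff, Fin.forall_fin_two, e₃, trace_fin_two]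

theorem lie_e₁_lie_e₁_e₂ : ⁅e₁, ⁅e₁, e₂⁆⁆ = (-4 : ℝ) • e₂ := by
  simp [e₁, e₂, Ring.lie_def, Complex.ext_iff]
  norm_num

theorem lie_e₁_lie_e₁_e₃ : ⁅e₁, ⁅e₁, e₃⁆⁆ = (-4 : ℝ) • e₃ := by
  simp [e₁, e₃, Ring.lie_def, Complex.ext_iff]
  norm_num

theorem lie_e₂_lie_e₂_e₁ : ⁅e₂, ⁅e₂, e₁⁆⁆ = (-4 : ℝ) • e₁ := by
  simp [e₁, e₂, Ring.lie_def, Complex.ext_iff]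
  norm_num

theorem eq_smul_e₁_add_smul_e₂_add_smul_e₃ {X : Matrix (Fin 2) (Fin 2) ℂ}
    (hX : X ∈ specialUnitaryLieAlgebra (Fin 2)) :
    X = (X 0 0).im • e₁ + (X 0 1).re • e₂ + (X 0 1).im • e₃ := by
  obtain ⟨hskew, htr⟩ := hX
  simp only [← Matrix.ext_iff, Fin.forall_fin_two, conjTranspose_apply] at hskew
  simp [← Matrix.ext_iff, Fin.forall_fin_two, trace_fin_two, e₁, e₂, e₃, Complex.ext_iff]
    at hskew htr ⊢
  grind

theorem le_span_lie_lie_fin_two :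
    specialUnitaryLieAlgebra (Fin 2) ≤
      Submodule.span ℝ {Z | ∃ X ∈ specialUnitaryLieAlgebra (Fin 2),
        ∃ Y ∈ specialUnitaryLieAlgebra (Fin 2), Z = ⁅X, ⁅X, Y⁆⁆} := by
  intro X hX
  rw [eq_smul_e₁_add_smul_e₂_add_smul_e₃ hX]
  refine add_mem (add_mem (Submodule.smul_mem _ _ ?_) (Submodule.smul_mem _ _ ?_))
    (Submodule.smul_mem _ _ ?_)
  · exact mem_span_lie_lie_of_lie_lie_eq_smul e₂_mem e₁_mem (by norm_num) lie_e₂_lie_e₂_e₁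
  · exact mem_span_lie_lie_of_lie_lie_eq_smul e₁_mem e₂_mem (by norm_num) lie_e₁_lie_e₁_e₂
  · exact mem_span_lie_lie_of_lie_lie_eq_smul e₁_mem e₃_mem (by norm_num) lie_e₁_lie_e₁_e₃

end specialUnitaryLieAlgebra

/-- `su(2)`, the traceless skew-Hermitian 2×2 complex matrices, is (as a set) the real
linear span of the nested commutators `[X,[X,Y]]` with `X, Y ∈ su(2)`. -/
theorem stmt_5 :
    let su2 : Set (Matrix (Fin 2) (Fin 2) ℂ) :=
      {X | X.conjTranspose = -X ∧ X.trace = 0}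
    (Submodule.span ℝ {Z : Matrix (Fin 2) (Fin 2) ℂ |
        ∃ X ∈ su2, ∃ Y ∈ su2, Z = ⁅X, ⁅X, Y⁆⁆} : Set (Matrix (Fin 2) (Fin 2) ℂ))
      = su2 :=
  congrArg SetLike.coe <| le_antisymm specialUnitaryLieAlgebra.span_lie_lie_le
    specialUnitaryLieAlgebra.le_span_lie_lie_fin_two
end

section
/- For every n ≥ 2, the Lie algebra su(n) is the real linear span of the set of nested commutators {[A,[A,B]] : A, B in su(n)}. -/
/-! For `j ≠ k`, `(E_jj - E_kk, E_jk, E_kj)` is an `sl₂`-triple, and the three elements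
`E_jk - E_kj`, `i (E_jk + E_kj)`, `i (E_jj - E_kk)` of `su(n)` built from it satisfy
`[A, [A, G]] = -4 G` for a suitable partner `A` among them. So they all lie in the span of the
nested brackets, and they span `su(n)`: a skew-Hermitian `X` with zero diagonal is
`½ (X - Xᴴ) = ½ ∑ (x_jk E_jk - x̄_jk E_kj)`, and a traceless diagonal one is
`∑_j x_jj (E_jj - E_kk)` for any fixed `k`. The reverse inclusion holds because `su(n)` is a
Lie subalgebra. -/

open Matrix

section NestedLieBrackets

variable {R L : Type*} [LieRing L]

def nestedLieBrackets (S : Set L) : Set L := {Z | ∃ A ∈ S, ∃ B ∈ S, Z = ⁅A, ⁅A, B⁆⁆}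

lemma LieSubalgebra.span_nestedLieBrackets_le [CommRing R] [LieAlgebra R L]
    (S : LieSubalgebra R L) :
    Submodule.span R (nestedLieBrackets (S : Set L)) ≤ S.toSubmodule := by
  rw [Submodule.span_le]
  rintro _ ⟨A, hA, B, hB, rfl⟩
  exact S.lie_mem hA (S.lie_mem hA hB)

lemma mem_span_nestedLieBrackets_of_lie_lie_eq_smul [Field R] [LieAlgebra R L]
    {S : Set L} {A G : L} (hA : A ∈ S) (hG : G ∈ S) {c : R} (hc : c ≠ 0)
    (h : ⁅A, ⁅A, G⁆⁆ = c • G) :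
    G ∈ Submodule.span R (nestedLieBrackets S) := by
  rw [← inv_smul_smul₀ hc G, ← h]
  exact Submodule.smul_mem _ _ (Submodule.subset_span ⟨A, hA, G, hG, rfl⟩)

end NestedLieBrackets

namespace IsSl2Triple

open Complex

variable {L : Type*} [LieRing L] {h e f : L}

lemma lie_f_e (ht : IsSl2Triple h e f) : ⁅f, e⁆ = -h := by
  rw [← lie_skew, ht.lie_e_f]

lemma lie_e_h (ht : IsSl2Triple h e f) : ⁅e, h⁆ = -(2 • e) := by
  rw [← lie_skew, ht.lie_h_e_nsmul]

lemma lie_f_h (ht : IsSl2Triple h e f) : ⁅f, h⁆ = 2 • f := by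
  rw [← lie_skew, ht.lie_h_f_nsmul, neg_neg]

variable [LieAlgebra ℂ L]

lemma lie_sub_lie_sub_I_smul_add (ht : IsSl2Triple h e f) :
    ⁅e - f, ⁅e - f, I • (e + f)⁆⁆ = -(4 • I • (e + f)) := by
  simp only [lie_sub, sub_lie, lie_add, lie_smul, lie_neg, lie_self,
    ht.lie_e_f, ht.lie_f_e, ht.lie_e_h, ht.lie_f_h]
  module

lemma lie_I_smul_add_lie_sub (ht : IsSl2Triple h e f) :
    ⁅I • (e + f), ⁅I • (e + f), e - f⁆⁆ = -(4 • (e - f)) := by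
  simp only [lie_sub, lie_add, add_lie, lie_smul, smul_lie, lie_neg, lie_self,
    ht.lie_e_f, ht.lie_f_e, ht.lie_e_h, ht.lie_f_h]
  match_scalars <;> ring_nf <;> simp [I_sq]

lemma lie_I_smul_add_lie_I_smul (ht : IsSl2Triple h e f) :
    ⁅I • (e + f), ⁅I • (e + f), I • h⁆⁆ = -(4 • I • h) := by
  simp only [lie_add, add_lie, lie_smul, smul_lie, lie_nsmul, lie_neg, lie_self,
    ht.lie_e_f, ht.lie_f_e, ht.lie_e_h, ht.lie_f_h]
  match_scalars
  ring_nf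
  simp [pow_three]

end IsSl2Triple

namespace Matrix

variable {ι α : Type*} [Fintype ι] [DecidableEq ι]

lemma sub_conjTranspose_eq_sum [AddCommGroup α] [StarAddMonoid α] (X : Matrix ι ι α) :
    X - Xᴴ = ∑ j, ∑ k, (single j k (X j k) - single k j (star (X j k))) := by
  ext a b
  simp [Matrix.sum_apply, single_apply, ite_and]

lemma diagonal_eq_sum_single_sub_single [AddCommGroup α] (d : ι → α) (hd : ∑ j, d j = 0)
    (k : ι) : diagonal d = ∑ j, (single j j (d j) - single k k (d j)) := by
  have hk : ∑ j, single k k (d j) = 0 := by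
    simp only [← singleAddMonoidHom_apply, ← map_sum, hd, map_zero]
  rw [Finset.sum_sub_distrib, hk, sub_zero, sum_single_eq_diagonal]

section SpecialUnitary

attribute [local instance] LieRing.ofAssociativeRing

lemma isSl2Triple_single {R : Type*} [Ring R] [Nontrivial R] {j k : ι} (hjk : j ≠ k) :
    IsSl2Triple (L := Matrix ι ι R)
      (single j j 1 - single k k 1) (single j k 1) (single k j 1) where
  h_ne_zero h := by simpa [hjk, hjk.symm] using congr_fun (congr_fun h j) j
  lie_e_f := by simp only [Ring.lie_def, single_mul_single_same, mul_one]
  lie_h_e_nsmul := by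
    simp only [Ring.lie_def, sub_mul, mul_sub, single_mul_single_same, mul_one,
      single_mul_single_of_ne _ _ _ _ hjk.symm]
    abel
  lie_h_f_nsmul := by
    simp only [Ring.lie_def, sub_mul, mul_sub, single_mul_single_same, mul_one,
      single_mul_single_of_ne _ _ _ _ hjk]
    abel

variable (ι) in
def specialUnitaryLieAlgebra : LieSubalgebra ℝ (Matrix ι ι ℂ) where
  carrier := {X | Xᴴ = -X ∧ X.trace = 0}
  add_mem' hX hY :=
    ⟨by rw [conjTranspose_add, hX.1, hY.1, neg_add], by rw [trace_add, hX.2, hY.2, add_zero]⟩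
  zero_mem' := ⟨by simp, by simp⟩
  smul_mem' c X hX := ⟨by simp [hX.1], by rw [trace_smul, hX.2, smul_zero]⟩
  lie_mem' {X Y} hX hY := by
    refine ⟨?_, by rw [Ring.lie_def, trace_sub, trace_mul_comm, sub_self]⟩
    rw [Ring.lie_def, conjTranspose_sub, conjTranspose_mul, conjTranspose_mul, hX.1, hY.1]
    noncomm_ring

lemma single_sub_single_star_mem_specialUnitaryLieAlgebra {j k : ι} (hjk : j ≠ k) (z : ℂ) :
    single j k z - single k j (star z) ∈ specialUnitaryLieAlgebra ι :=
  ⟨by simp, by simp [trace_single_eq_of_ne _ _ _ hjk, trace_single_eq_of_ne _ _ _ hjk.symm]⟩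

lemma single_sub_single_mem_specialUnitaryLieAlgebra (j k : ι) {d : ℂ} (hd : star d = -d) :
    single j j d - single k k d ∈ specialUnitaryLieAlgebra ι :=
  ⟨by simp only [conjTranspose_sub, conjTranspose_single, hd, ← single_neg, neg_sub_neg,
      neg_sub], by simp⟩

lemma I_smul_single_add_single_mem_specialUnitaryLieAlgebra {j k : ι} (hjk : j ≠ k) :
    Complex.I • (single j k 1 + single k j 1) ∈ specialUnitaryLieAlgebra ι := by
  convert single_sub_single_star_mem_specialUnitaryLieAlgebra hjk Complex.I using 1
  simp [smul_single, sub_eq_add_neg, ← single_neg]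

lemma single_sub_single_star_mem_span_nestedLieBrackets {j k : ι} (hjk : j ≠ k) (z : ℂ) :
    single j k z - single k j (star z) ∈
      Submodule.span ℝ (nestedLieBrackets (specialUnitaryLieAlgebra ι : Set _)) := by
  have ht := isSl2Triple_single (R := ℂ) hjk
  have hu := I_smul_single_add_single_mem_specialUnitaryLieAlgebra hjk
  have hv : single j k 1 - single k j 1 ∈ specialUnitaryLieAlgebra ι := by
    simpa using single_sub_single_star_mem_specialUnitaryLieAlgebra hjk 1
  have hdecomp : single j k z - single k j (star z) = z.re • (single j k 1 - single k j 1) +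
      z.im • (Complex.I • (single j k 1 + single k j 1)) := by
    ext a b
    simp only [sub_apply, add_apply, smul_apply, single_apply]
    split_ifs <;> simp_all [Complex.ext_iff]
  rw [hdecomp]
  refine add_mem (Submodule.smul_mem _ _ ?_) (Submodule.smul_mem _ _ ?_)
  · refine mem_span_nestedLieBrackets_of_lie_lie_eq_smul hu hv (c := -4) (by norm_num) ?_
    rw [ht.lie_I_smul_add_lie_sub]
    module
  · refine mem_span_nestedLieBrackets_of_lie_lie_eq_smul hv hu (c := -4) (by norm_num) ?_
    rw [ht.lie_sub_lie_sub_I_smul_add]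
    module

lemma single_sub_single_mem_span_nestedLieBrackets (j k : ι) {d : ℂ} (hd : star d = -d) :
    single j j d - single k k d ∈
      Submodule.span ℝ (nestedLieBrackets (specialUnitaryLieAlgebra ι : Set _)) := by
  rcases eq_or_ne j k with rfl | hjk
  · rw [sub_self]
    exact zero_mem _
  have ht := isSl2Triple_single (R := ℂ) hjk
  have hh : Complex.I • (single j j 1 - single k k 1) ∈ specialUnitaryLieAlgebra ι := by
    simpa [smul_sub, smul_single] using single_sub_single_mem_specialUnitaryLieAlgebra j k
      (d := Complex.I) (by simp)
  have hdecomp :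
      single j j d - single k k d = d.im • (Complex.I • (single j j 1 - single k k 1)) := by
    have hre : d.re = 0 := by
      linarith [(by simpa [Complex.ext_iff] using hd : d.re = -d.re)]
    ext a b
    simp only [sub_apply, smul_apply, single_apply]
    split_ifs <;> simp [Complex.ext_iff, hre]
  rw [hdecomp]
  refine Submodule.smul_mem _ _ (mem_span_nestedLieBrackets_of_lie_lie_eq_smul
    (I_smul_single_add_single_mem_specialUnitaryLieAlgebra hjk) hh (c := -4) (by norm_num) ?_)
  rw [ht.lie_I_smul_add_lie_I_smul]
  module

theorem span_nestedLieBrackets_specialUnitaryLieAlgebra :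
    Submodule.span ℝ (nestedLieBrackets (specialUnitaryLieAlgebra ι : Set _)) =
      (specialUnitaryLieAlgebra ι).toSubmodule := by
  refine le_antisymm (LieSubalgebra.span_nestedLieBrackets_le _) fun X ⟨hX, htr⟩ => ?_
  have hstar (j : ι) : star (X j j) = -X j j := by simpa using congr_fun₂ hX j j
  have hdiag : diagonal (diag X) ∈
      Submodule.span ℝ (nestedLieBrackets (specialUnitaryLieAlgebra ι : Set _)) := by
    cases isEmpty_or_nonempty ι
    · rw [Subsingleton.elim (diagonal _) 0]
      exact zero_mem _
    obtain ⟨k⟩ := ‹Nonempty ι›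
    rw [diagonal_eq_sum_single_sub_single _ htr k]
    exact sum_mem fun j _ => single_sub_single_mem_span_nestedLieBrackets j k (hstar j)
  set Y := X - diagonal (diag X) with hY
  have hYskew : Yᴴ = -Y := by
    have hdiag_star : star (diag X) = fun j => -X j j := funext hstar
    rw [hY, conjTranspose_sub, hX, diagonal_conjTranspose, hdiag_star, ← diagonal_neg]
    abel
  have hYoff : Y - Yᴴ ∈
      Submodule.span ℝ (nestedLieBrackets (specialUnitaryLieAlgebra ι : Set _)) := by
    rw [sub_conjTranspose_eq_sum]
    refine sum_mem fun j _ => sum_mem fun k _ => ?_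
    rcases eq_or_ne j k with rfl | hjk
    · simp [hY]
    · exact single_sub_single_star_mem_span_nestedLieBrackets hjk _
  have hX_eq : X = (2⁻¹ : ℝ) • (Y - Yᴴ) + diagonal (diag X) := by
    rw [hYskew, hY]
    module
  rw [hX_eq]
  exact add_mem (Submodule.smul_mem _ _ hYoff) hdiag

end SpecialUnitary

end Matrix

theorem stmt_6_general (n : ℕ) :
    let su : Set (Matrix (Fin n) (Fin n) ℂ) :=
      {X | X.conjTranspose = -X ∧ X.trace = 0}
    (Submodule.span ℝ {Z : Matrix (Fin n) (Fin n) ℂ |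
        ∃ A ∈ su, ∃ B ∈ su, Z = ⁅A, ⁅A, B⁆⁆} : Set (Matrix (Fin n) (Fin n) ℂ))
      = su :=
  congrArg SetLike.coe (Matrix.span_nestedLieBrackets_specialUnitaryLieAlgebra (ι := Fin n))

/-- For every `n ≥ 2`, `su(n)` (traceless skew-Hermitian `n×n` complex matrices) is, as a
set, the real linear span of the nested commutators `[A,[A,B]]` with `A, B ∈ su(n)`. -/
theorem stmt_6 (n : ℕ) (hn : 2 ≤ n) :
    let su : Set (Matrix (Fin n) (Fin n) ℂ) :=
      {X | X.conjTranspose = -X ∧ X.trace = 0}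
    (Submodule.span ℝ {Z : Matrix (Fin n) (Fin n) ℂ |
        ∃ A ∈ su, ∃ B ∈ su, Z = ⁅A, ⁅A, B⁆⁆} : Set (Matrix (Fin n) (Fin n) ℂ))
      = su :=
  stmt_6_general n
end

section
/- Let g be the Lie algebra of a compact connected matrix Lie group and suppose g has trivial centre. Then g equals the real linear span of the set {[X,[X,Y]] : X, Y in g}. -/
/-!
If `w` is `Φ`-orthogonal to every `[X, [X, Y]]`, moving `ad X` across the invariant form twice
shows that `[X, [X, w]]` is orthogonal to everything, hence zero; moving it once more gives
`Φ([X, w], [X, w]) = -Φ(w, [X, [X, w]]) = 0`, so `w` is central, hence zero. A subspace with zero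
orthogonal complement for a nondegenerate form on a finite-dimensional space is everything.
-/

namespace LinearMap.BilinForm

theorem nondegenerate_of_apply_self_eq_zero {R M : Type*} [CommRing R] [AddCommGroup M]
    [Module R M] {B : LinearMap.BilinForm R M} (hB : ∀ x, B x x = 0 → x = 0) :
    B.Nondegenerate :=
  ⟨fun x hx ↦ hB x (hx x), fun y hy ↦ hB y (hy y)⟩

theorem Nondegenerate.eq_top_of_orthogonal_eq_bot {K V : Type*} [Field K] [AddCommGroup V]
    [Module K V] [FiniteDimensional K V] {B : LinearMap.BilinForm K V} (hB : B.Nondegenerate)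
    {W : Submodule K V} (hW : B.orthogonal W = ⊥) : W = ⊤ := by
  have h := finrank_orthogonal hB W
  rw [hW, finrank_bot] at h
  exact Submodule.eq_top_of_finrank_eq ((Submodule.finrank_le W).antisymm (by omega))

namespace lieInvariant

variable {R L M : Type*} [CommRing R] [LieRing L] [AddCommGroup M] [Module R M]
  [LieRingModule L M] {Φ : LinearMap.BilinForm R M}

theorem apply_lie_lie (hΦ : Φ.lieInvariant L) (x : L) (m n : M) :
    Φ ⁅x, ⁅x, m⁆⁆ n = Φ m ⁅x, ⁅x, n⁆⁆ := by
  rw [hΦ, hΦ, neg_neg]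

theorem lie_eq_zero_of_lie_lie_eq_zero (hΦ : Φ.lieInvariant L)
    (hanis : ∀ m, Φ m m = 0 → m = 0) {x : L} {m : M} (hm : ⁅x, ⁅x, m⁆⁆ = 0) : ⁅x, m⁆ = 0 :=
  hanis _ (by rw [hΦ, hm, map_zero, neg_zero])

theorem orthogonal_span_lie_lie_le_maxTrivSubmodule [LieAlgebra R L] [LieModule R L M]
    (hΦ : Φ.lieInvariant L) (hanis : ∀ m, Φ m m = 0 → m = 0) :
    Φ.orthogonal (Submodule.span R {m : M | ∃ (x : L) (n : M), m = ⁅x, ⁅x, n⁆⁆}) ≤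
      (LieModule.maxTrivSubmodule R L M).toSubmodule := by
  intro w hw
  rw [LieSubmodule.mem_toSubmodule, LieModule.mem_maxTrivSubmodule]
  intro x
  refine hΦ.lie_eq_zero_of_lie_lie_eq_zero hanis ?_
  refine (nondegenerate_of_apply_self_eq_zero hanis).2 _ fun n ↦ ?_
  rw [← hΦ.apply_lie_lie]
  exact hw _ (Submodule.subset_span ⟨x, n, rfl⟩)

end lieInvariant

end LinearMap.BilinForm

theorem stmt_9_general (L : Type*) [LieRing L] [LieAlgebra ℝ L] [Module.Finite ℝ L]
    (Φ : L →ₗ[ℝ] L →ₗ[ℝ] ℝ)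
    (hpos : ∀ x : L, x ≠ 0 → 0 < Φ x x)
    (hinv : ∀ x y z : L, Φ ⁅z, x⁆ y + Φ x ⁅z, y⁆ = 0)
    (hcentre : LieAlgebra.center ℝ L = ⊥) :
    Submodule.span ℝ {z : L | ∃ X Y : L, z = ⁅X, ⁅X, Y⁆⁆} = ⊤ := by
  have hanis : ∀ x, Φ x x = 0 → x = 0 := fun x hx ↦ by_contra fun h ↦ (hpos x h).ne' hx
  have hΦ : LinearMap.BilinForm.lieInvariant L Φ := fun x y z ↦
    eq_neg_of_add_eq_zero_left (hinv y z x)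
  have hnd := LinearMap.BilinForm.nondegenerate_of_apply_self_eq_zero hanis
  refine hnd.eq_top_of_orthogonal_eq_bot (eq_bot_iff.2 ?_)
  rw [← (LieSubmodule.toSubmodule_eq_bot _).2 hcentre]
  exact hΦ.orthogonal_span_lie_lie_le_maxTrivSubmodule hanis

/-- Let `g` be the Lie algebra of a compact connected matrix Lie group (encoded by the
existence of an ad-invariant positive definite symmetric real bilinear form on the
finite-dimensional real Lie algebra `g`) with trivial centre. Then `g` equals the real
linear span of the nested commutators `[X,[X,Y]]`, `X, Y ∈ g`. -/
theorem stmt_9 (L : Type*) [LieRing L] [LieAlgebra ℝ L] [Module.Finite ℝ L]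
    (Φ : L →ₗ[ℝ] L →ₗ[ℝ] ℝ)
    (hsymm : ∀ x y : L, Φ x y = Φ y x)
    (hpos : ∀ x : L, x ≠ 0 → 0 < Φ x x)
    (hinv : ∀ x y z : L, Φ ⁅z, x⁆ y + Φ x ⁅z, y⁆ = 0)
    (hcentre : LieAlgebra.center ℝ L = ⊥) :
    Submodule.span ℝ {z : L | ∃ X Y : L, z = ⁅X, ⁅X, Y⁆⁆} = ⊤ :=
  stmt_9_general L Φ hpos hinv hcentre
end
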